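/- The image of P₃ under H_Δ is H_Δ(P₃) = {(a,b) ∈ P : 1 ≤ b ≤ 2a^{−5/4}}, and P₃ ⊆ H_Δ(P₃). -/

import Mathlib

/-- The parameter region P. -/
def Pset : Set (ℝ × ℝ) :=
  {p | 1 < p.1 ∧ p.1 ≤ 2 ∧ 1 ≤ p.2 ∧ p.2 ≤ 2 ∧ p.1 * p.2 ≤ 2}

/-- The parameter region P₃. -/
def P3 : Set (ℝ × ℝ) :=
  {p | p ∈ Pset ∧
    (2 + p.1 ^ 2 + p.1 ^ 3) / (1 + p.1 + p.1 ^ 3) ≤ p.2 ∧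
    p.2 ≤ 2 * (1 + p.1 + p.1 ^ 3) / (p.1 * (2 + p.1 ^ 2 + p.1 ^ 3))}

/-- The renormalization operator H_Δ. -/
noncomputable def HDelta (p : ℝ × ℝ) : ℝ × ℝ :=
  (p.1 ^ 4, (p.1 * p.2 + p.2 - 2) / (p.1 ^ 2 * (1 + p.1 - p.1 * p.2)))

/-!
For fixed `a > 1`, the second component `g(a, b)` of `H_Δ(a, b)` is a Möbius transformation of `b`
with inverse `y ↦ (2 + a²(1 + a)y) / (1 + a + a³y)`. Clearing denominators, the two inequalities
cutting `P₃` out of `P` become exactly `1 ≤ g(a, b)` and `g(a, b) a⁵ ≤ 2`, so `H_Δ(P₃)` is the set of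
points `(a⁴, y)` with `1 ≤ y ≤ 2a⁻⁵ = 2(a⁴)^(-5/4)`; the remaining constraints of `P` follow from
these. The inclusion `P₃ ⊆ H_Δ(P₃)` comes from `a²b ≤ 2` on `P₃`.
-/

noncomputable def HDeltaSndInv (a y : ℝ) : ℝ :=
  (2 + a ^ 2 * (1 + a) * y) / (1 + a + a ^ 3 * y)

section

variable {a b y : ℝ}

lemma one_le_HDelta_snd_iff (ha : 0 < a) (hD : 0 < 1 + a - a * b) :
    1 ≤ (HDelta (a, b)).2 ↔ (2 + a ^ 2 + a ^ 3) / (1 + a + a ^ 3) ≤ b := by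
  rw [HDelta, le_div_iff₀ (by positivity), div_le_iff₀ (by positivity)]
  constructor <;> intro h <;> linarith

lemma HDelta_snd_mul_pow_five_le_two_iff (ha : 0 < a) (hD : 0 < 1 + a - a * b) :
    (HDelta (a, b)).2 * a ^ 5 ≤ 2 ↔ b ≤ 2 * (1 + a + a ^ 3) / (a * (2 + a ^ 2 + a ^ 3)) := by
  have key : (HDelta (a, b)).2 * a ^ 5 = a ^ 3 * (a * b + b - 2) / (1 + a - a * b) := by
    simp only [HDelta]
    field_simp
  rw [key, div_le_iff₀ hD, le_div_iff₀ (by positivity)]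
  constructor <;> intro h <;> nlinarith

lemma mem_P3_iff (h : (a, b) ∈ Pset) :
    (a, b) ∈ P3 ↔ 1 ≤ (HDelta (a, b)).2 ∧ (HDelta (a, b)).2 * a ^ 5 ≤ 2 := by
  have ha : 1 < a := h.1
  have hD : 0 < 1 + a - a * b := by linarith [h.2.2.2.2]
  rw [one_le_HDelta_snd_iff (by linarith) hD, HDelta_snd_mul_pow_five_le_two_iff (by linarith) hD]
  exact and_iff_right h

lemma HDelta_HDeltaSndInv (ha : 0 < a) (hy : 0 ≤ y) :
    HDelta (a, HDeltaSndInv a y) = (a ^ 4, y) := by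
  have hden : 0 < 1 + a + a ^ 3 * y := by positivity
  have hD : 1 + a - a * HDeltaSndInv a y = (1 + a ^ 2) / (1 + a + a ^ 3 * y) := by
    rw [HDeltaSndInv]
    field_simp
    ring
  simp only [HDelta, hD, Prod.mk.injEq, true_and]
  rw [HDeltaSndInv]
  field_simp
  ring

lemma HDeltaSndInv_mem_P3 (ha : 1 < a) (hy : 1 ≤ y) (hya : y * a ^ 5 ≤ 2) :
    (a, HDeltaSndInv a y) ∈ P3 := by
  have hden : 0 < 1 + a + a ^ 3 * y := by positivity
  have ha5 : a ≤ a ^ 5 := le_self_pow₀ ha.le (by norm_num)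
  have ha45 : a ^ 4 ≤ a ^ 5 := pow_le_pow_right₀ ha.le (by norm_num)
  have hmem : (a, HDeltaSndInv a y) ∈ Pset := by
    refine ⟨ha, by nlinarith, ?_, ?_, ?_⟩ <;>
      simp only [HDeltaSndInv, ← mul_div_assoc, le_div_iff₀ hden, div_le_iff₀ hden] <;>
      nlinarith
  rw [mem_P3_iff hmem, HDelta_HDeltaSndInv (by linarith) (by linarith)]
  exact ⟨hy, hya⟩

lemma sq_mul_le_two_of_mem_P3 (h : (a, b) ∈ P3) : a ^ 2 * b ≤ 2 := by
  have ha : 1 < a := h.1.1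
  obtain ⟨hg1, hg5⟩ := (mem_P3_iff h.1).1 h
  have ha5 : a ^ 5 ≤ 2 := by nlinarith
  have ha3 : a ^ 3 ≤ 2 := (pow_le_pow_right₀ ha.le (by norm_num : 3 ≤ 5)).trans ha5
  have hsum : 5 ≤ a ^ 4 + a ^ 3 + a ^ 2 + a + 1 := by
    nlinarith [one_lt_pow₀ ha (by norm_num : 4 ≠ 0), one_lt_pow₀ ha (by norm_num : 3 ≠ 0),
      one_lt_pow₀ ha (by norm_num : 2 ≠ 0)]
  -- `a⁵ ≤ 2` forces `a ≤ 6/5`, small enough for `a + a⁴ ≤ 2 + a³`.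
  have ha_small : 5 * (a - 1) ≤ 1 := by
    nlinarith [mul_nonneg (by linarith : 0 ≤ a - 1)
      (by linarith : 0 ≤ a ^ 4 + a ^ 3 + a ^ 2 + a + 1 - 5)]
  have hquartic : a + a ^ 4 ≤ 2 + a ^ 3 := by
    nlinarith [mul_le_mul_of_nonneg_right ha3 (by linarith : 0 ≤ a - 1)]
  have hK : 0 < 2 + a ^ 2 + a ^ 3 := by positivity
  have hhi : b * (a * (2 + a ^ 2 + a ^ 3)) ≤ 2 * (1 + a + a ^ 3) :=
    (le_div_iff₀ (by positivity)).1 h.2.2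
  refine le_of_mul_le_mul_right ?_ hK
  calc a ^ 2 * b * (2 + a ^ 2 + a ^ 3) = a * (b * (a * (2 + a ^ 2 + a ^ 3))) := by ring
    _ ≤ a * (2 * (1 + a + a ^ 3)) := by gcongr
    _ ≤ 2 * (2 + a ^ 2 + a ^ 3) := by nlinarith

lemma pow_four_rpow_neg_five_div_four (ha : 0 ≤ a) :
    (a ^ 4) ^ (-(5 : ℝ) / 4) = (a ^ 5)⁻¹ := by
  rw [← Real.rpow_natCast a 4, ← Real.rpow_mul ha, ← Real.rpow_natCast a 5, ← Real.rpow_neg ha]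
  norm_num

lemma inv_sq_le_rpow_neg_five_div_four (ha : 1 ≤ a) : (a ^ 2)⁻¹ ≤ a ^ (-(5 : ℝ) / 4) := by
  rw [← Real.rpow_two, ← Real.rpow_neg (by linarith)]
  exact Real.rpow_le_rpow_of_exponent_le ha (by norm_num)

lemma le_two_mul_rpow_neg_five_div_four_of_mem_P3 (h : (a, b) ∈ P3) :
    b ≤ 2 * a ^ (-(5 : ℝ) / 4) := by
  have ha : 1 < a := h.1.1
  calc b ≤ 2 * (a ^ 2)⁻¹ := by
        rw [← div_eq_mul_inv, le_div_iff₀ (by positivity), mul_comm]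
        exact sq_mul_le_two_of_mem_P3 h
    _ ≤ 2 * a ^ (-(5 : ℝ) / 4) := by
        gcongr
        exact inv_sq_le_rpow_neg_five_div_four ha.le

lemma pow_four_mem_image_iff (ha : 1 < a) :
    (a ^ 4, y) ∈ {p ∈ Pset | 1 ≤ p.2 ∧ p.2 ≤ 2 * p.1 ^ (-(5 : ℝ) / 4)} ↔
      1 ≤ y ∧ y * a ^ 5 ≤ 2 := by
  have ha5 : 0 < a ^ 5 := by positivity
  simp only [Set.mem_ofPred_eq, pow_four_rpow_neg_five_div_four (by linarith : 0 ≤ a),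
    ← div_eq_mul_inv, le_div_iff₀ ha5]
  refine ⟨fun h => h.2, fun ⟨hy, hya⟩ => ⟨?_, hy, hya⟩⟩
  have ha4 : 1 < a ^ 4 := one_lt_pow₀ ha (by norm_num)
  have ha45 : a ^ 4 ≤ a ^ 5 := pow_le_pow_right₀ ha.le (by norm_num)
  exact ⟨ha4, by nlinarith, hy, by nlinarith, by nlinarith⟩

lemma exists_one_lt_pow_four_eq (hy : 1 < y) : ∃ a, 1 < a ∧ a ^ 4 = y :=
  ⟨y ^ ((4 : ℕ)⁻¹ : ℝ), Real.one_lt_rpow hy (by norm_num),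
    Real.rpow_inv_natCast_pow (by linarith) (by norm_num)⟩

end

theorem HDelta_image_P3 :
    HDelta '' P3 = {p ∈ Pset | 1 ≤ p.2 ∧ p.2 ≤ 2 * p.1 ^ (-(5 : ℝ) / 4)} ∧
    P3 ⊆ HDelta '' P3 := by
  have himage : HDelta '' P3 = {p ∈ Pset | 1 ≤ p.2 ∧ p.2 ≤ 2 * p.1 ^ (-(5 : ℝ) / 4)} := by
    ext p
    constructor
    · rintro ⟨⟨a, b⟩, h, rfl⟩
      exact (pow_four_mem_image_iff h.1.1).2 ((mem_P3_iff h.1).1 h)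
    · obtain ⟨x, y⟩ := p
      intro hxy
      obtain ⟨a, ha, rfl⟩ := exists_one_lt_pow_four_eq hxy.1.1
      obtain ⟨hy, hya⟩ := (pow_four_mem_image_iff ha).1 hxy
      exact ⟨_, HDeltaSndInv_mem_P3 ha hy hya, HDelta_HDeltaSndInv (by linarith) (by linarith)⟩
  refine ⟨himage, ?_⟩
  rintro ⟨a, b⟩ h
  rw [himage]
  exact ⟨h.1, h.1.2.2.1, le_two_mul_rpow_neg_five_div_four_of_mem_P3 h⟩
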